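/- Let N ≥ 1 and let x_1 ∈ ℝ^n be fixed. Let (Ω, F, P) be a probability space, and for k = 1, …, N let G_k : Ω → ℝ^n be square-integrable random vectors and γ_k ∈ (0, 2/L] real stepsizes. Define random iterates recursively by x_{k+1}(ω) := x⁺(x_k(ω), G_k(ω), γ_k) (the unique minimizer of u ↦ ψ_{γ_k}(x_k(ω), G_k(ω), u)), and set g̃_k^r := P_{γ_k}(x_k, G_k) and g̃_k := P_{γ_k}(x_k, ∇f(x_k)). Assume Φ_h(x) ≥ Φ_h^low for all x ∈ ℝ^n, and that for each k: E[⟨G_k − ∇f(x_k), g̃_k⟩] = 0 and E[‖G_k − ∇f(x_k)‖²] ≤ σ²/m_k, where σ > 0 and m_k > 0. Then Σ_{k=1}^N (γ_k − L γ_k²/2) · E[‖g̃_k^r‖²] ≤ Φ_h(x_1) − Φ_h^low + σ² Σ_{k=1}^N γ_k/m_k. (Equivalently, if R is a random index on {1,…,N}, independent of the G_k, with P(R = k) proportional to γ_k − Lγ_k²/2 and γ_k < 2/L for at least one k, then E[‖g̃_R^r‖²] ≤ (Φ_h(x_1) − Φ_h^low + σ² Σ_k γ_k/m_k) / Σ_k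 (γ_k − Lγ_k²/2).) -/

import Mathlib

open MeasureTheory Set Filter Topology
open scoped RealInnerProductSpace BigOperators ProbabilityTheory

/-!
Each iterate is a perturbed prox-linear step. Because `ψ_γ(x, g, ·)` is `1/γ`-strongly convex, its
minimizer satisfies a three-point inequality; together with the quadratic upper bounds for `f`
(Lipschitz gradient) and for `h ∘ c` (Lipschitz `h`, Lipschitz Jacobian) it gives, pointwise in `ω`
and with `δ_k = G_k - ∇f(x_k)`,
`(γ_k - Lγ_k²/2)‖g̃_k^r‖² ≤ Φ_h(x_k) - Φ_h(x_{k+1}) + γ_k⟪δ_k, g̃_k⟫ + γ_k‖δ_k‖²`,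
where the last term comes from `x⁺(x, ·, γ)` being `γ`-Lipschitz. Summing telescopes the `Φ_h`
terms; in expectation `⟪δ_k, g̃_k⟫` vanishes and `‖δ_k‖²` is at most `σ²/m_k`.
-/

theorem norm_sub_sub_fderiv_le_of_lipschitz {E V : Type*} [NormedAddCommGroup E]
    [NormedSpace ℝ E] [NormedAddCommGroup V] [NormedSpace ℝ V] {F : E → V}
    {D : E → E →L[ℝ] V} {K : ℝ} (hF : ∀ z, HasFDerivAt F (D z) z)
    (hD : ∀ a b, ‖D a - D b‖ ≤ K * ‖a - b‖) (x y : E) :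
    ‖F y - F x - D x (y - x)‖ ≤ K / 2 * ‖y - x‖ ^ 2 := by
  set v := y - x
  have hline : ∀ s : ℝ, HasDerivAt (fun s : ℝ => x + s • v) v s := fun s => by
    simpa using ((hasDerivAt_id s).smul_const v).const_add x
  have hφ : ∀ s : ℝ, HasDerivAt (fun s : ℝ => F (x + s • v) - F x - s • D x v)
      (D (x + s • v) v - D x v) s := fun s =>
    ((((hF _).comp_hasDerivAt s (hline s)).sub_const (F x)).sub
      ((hasDerivAt_id s).smul_const (D x v))).congr_deriv (by rw [one_smul])
  have hbound : ∀ s ∈ Ico (0 : ℝ) 1, ‖D (x + s • v) v - D x v‖ ≤ K * s * ‖v‖ ^ 2 := by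
    intro s hs
    calc ‖D (x + s • v) v - D x v‖ = ‖(D (x + s • v) - D x) v‖ := rfl
      _ ≤ K * ‖x + s • v - x‖ * ‖v‖ :=
        ((D _ - D x).le_opNorm v).trans (mul_le_mul_of_nonneg_right (hD _ _) (norm_nonneg v))
      _ = K * s * ‖v‖ ^ 2 := by
        rw [add_sub_cancel_left, norm_smul, Real.norm_of_nonneg hs.1]; ring
  have := image_norm_le_of_norm_deriv_right_le_deriv_boundary
    (B := fun s => K / 2 * s ^ 2 * ‖v‖ ^ 2) (B' := fun s => K * s * ‖v‖ ^ 2)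
    (fun s _ => (hφ s).continuousAt.continuousWithinAt) (fun s _ => (hφ s).hasDerivWithinAt)
    (by simp) (fun s =>
      (((hasDerivAt_pow 2 s).const_mul (K / 2)).mul_const (‖v‖ ^ 2)).congr_deriv (by ring))
    hbound (right_mem_Icc.2 zero_le_one)
  simpa [v] using this

theorem ConvexOn.comp_const_add_sub {E F : Type*} [AddCommGroup E] [Module ℝ E] [AddCommGroup F]
    [Module ℝ F] {h : F → ℝ} (hh : ConvexOn ℝ univ h) (b : F) (T : E →ₗ[ℝ] F) (a : E) :
    ConvexOn ℝ univ fun u => h (b + T (u - a)) := by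
  let A : E →ᵃ[ℝ] F :=
    { toFun := fun u => b + T (u - a)
      linear := T
      map_vadd' := fun u v => by
        simp only [vadd_eq_add, add_sub_assoc, map_add]
        abel }
  have hA := hh.comp_affineMap A
  rw [preimage_univ] at hA
  exact hA

section Prox

variable {E : Type*} [NormedAddCommGroup E] [InnerProductSpace ℝ E]

theorem ConvexOn.le_add_inner_div_of_forall_le {Q : E → ℝ} (hQ : ConvexOn ℝ univ Q) {a p : E}
    {t : ℝ} (hp : ∀ u, Q p + ‖p - a‖ ^ 2 / (2 * t) ≤ Q u + ‖u - a‖ ^ 2 / (2 * t)) (u : E) :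
    Q p ≤ Q u + ⟪p - a, u - p⟫ / t := by
  -- compare `p` with `p + l • (u - p)`, divide by `l` and let `l → 0⁺`
  have hslope : ∀ l ∈ Ioc (0 : ℝ) 1,
      Q p ≤ Q u + (2 * ⟪p - a, u - p⟫ + l * ‖u - p‖ ^ 2) / (2 * t) := by
    rintro l ⟨hl0, hl1⟩
    have hconv : Q (p + l • (u - p)) ≤ (1 - l) * Q p + l * Q u := by
      have e : (1 - l) • p + l • u = p + l • (u - p) := by
        rw [smul_sub, sub_smul, one_smul]; abel
      simpa only [e, smul_eq_mul] using
        hQ.2 (mem_univ p) (mem_univ u) (sub_nonneg.2 hl1) hl0.le (sub_add_cancel 1 l)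
    have hsq : ‖p + l • (u - p) - a‖ ^ 2 / (2 * t)
        = ‖p - a‖ ^ 2 / (2 * t) + l * ((2 * ⟪p - a, u - p⟫ + l * ‖u - p‖ ^ 2) / (2 * t)) := by
      rw [add_sub_right_comm, norm_add_sq_real, norm_smul, real_inner_smul_right,
        Real.norm_eq_abs, mul_pow, sq_abs]
      ring
    have hmin := hp (p + l • (u - p))
    rw [hsq] at hmin
    exact le_of_mul_le_mul_left (by linarith) hl0
  have hlim : Tendsto (fun l => Q u + (2 * ⟪p - a, u - p⟫ + l * ‖u - p‖ ^ 2) / (2 * t))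
      (𝓝[>] 0) (𝓝 (Q u + (2 * ⟪p - a, u - p⟫ + 0 * ‖u - p‖ ^ 2) / (2 * t))) :=
    ((by fun_prop : Continuous fun l : ℝ =>
      Q u + (2 * ⟪p - a, u - p⟫ + l * ‖u - p‖ ^ 2) / (2 * t)).tendsto 0).mono_left
      nhdsWithin_le_nhds
  have := ge_of_tendsto hlim (eventually_of_mem (Ioc_mem_nhdsGT one_pos) hslope)
  rwa [zero_mul, add_zero, mul_div_mul_left _ _ two_ne_zero] at this

theorem ConvexOn.add_sq_norm_sub_div_le_of_forall_le {Q : E → ℝ} (hQ : ConvexOn ℝ univ Q)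
    {a p : E} {t : ℝ}
    (hp : ∀ u, Q p + ‖p - a‖ ^ 2 / (2 * t) ≤ Q u + ‖u - a‖ ^ 2 / (2 * t)) (u : E) :
    Q p + ‖p - a‖ ^ 2 / (2 * t) + ‖u - p‖ ^ 2 / (2 * t) ≤ Q u + ‖u - a‖ ^ 2 / (2 * t) := by
  have hsub := hQ.le_add_inner_div_of_forall_le hp u
  have hexp : ‖u - a‖ ^ 2 = ‖p - a‖ ^ 2 + 2 * ⟪p - a, u - p⟫ + ‖u - p‖ ^ 2 := by
    rw [← norm_add_sq_real, sub_add_sub_cancel']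
  rw [hexp, add_div, add_div, mul_div_mul_left _ _ two_ne_zero]
  linarith

/-- `p` minimizes `u ↦ ⟪g, u - a⟫ + H u + ‖u - a‖² / (2t)`; the paper's `x⁺(a, g, t)` is such a
point for `H u = h (c a + J a (u - a))`. -/
def IsProxPoint (H : E → ℝ) (a g : E) (t : ℝ) (p : E) : Prop :=
  ∀ u, ⟪g, p - a⟫ + H p + ‖p - a‖ ^ 2 / (2 * t) ≤ ⟪g, u - a⟫ + H u + ‖u - a‖ ^ 2 / (2 * t)

variable {H : E → ℝ} {a g p : E} {t : ℝ}

theorem IsProxPoint.add_sq_norm_sub_div_le (hH : ConvexOn ℝ univ H) (hp : IsProxPoint H a g t p)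
    (u : E) :
    ⟪g, p - a⟫ + H p + ‖p - a‖ ^ 2 / (2 * t) + ‖u - p‖ ^ 2 / (2 * t) ≤
      ⟪g, u - a⟫ + H u + ‖u - a‖ ^ 2 / (2 * t) := by
  have hlin : ConvexOn ℝ univ fun u => ⟪g, u - a⟫ := by
    refine (((innerₛₗ ℝ g).convexOn convex_univ).add_const (-⟪g, a⟫)).congr fun u _ => ?_
    rw [inner_sub_right, sub_eq_add_neg]
    rfl
  exact (hlin.add hH).add_sq_norm_sub_div_le_of_forall_le hp u

theorem IsProxPoint.norm_sub_le (hH : ConvexOn ℝ univ H) (ht : 0 < t)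
    (hp : IsProxPoint H a g t p) {g' p' : E} (hp' : IsProxPoint H a g' t p') :
    ‖p - p'‖ ≤ t * ‖g - g'‖ := by
  have h₁ := hp.add_sq_norm_sub_div_le hH p'
  have h₂ := hp'.add_sq_norm_sub_div_le hH p
  have hsum : ‖p - p'‖ ^ 2 / t ≤ ⟪g - g', p' - p⟫ := by
    have e : ⟪g - g', p' - p⟫ = ⟪g, p' - a⟫ - ⟪g, p - a⟫ - (⟪g', p' - a⟫ - ⟪g', p - a⟫) := by
      simp only [inner_sub_left, inner_sub_right]; ring
    rw [norm_sub_rev p' p] at h₁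
    rw [e, ← add_halves (‖p - p'‖ ^ 2 / t), div_div, mul_comm t 2]
    linarith
  have hcs : ‖p - p'‖ ^ 2 ≤ t * ‖g - g'‖ * ‖p - p'‖ := by
    calc ‖p - p'‖ ^ 2 ≤ t * ⟪g - g', p' - p⟫ := by rwa [div_le_iff₀' ht] at hsum
      _ ≤ t * (‖g - g'‖ * ‖p' - p‖) := by gcongr; exact real_inner_le_norm _ _
      _ = t * ‖g - g'‖ * ‖p - p'‖ := by rw [norm_sub_rev p' p]; ring
  rcases (norm_nonneg (p - p')).eq_or_lt with h0 | hpos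
  · rw [← h0]; positivity
  · exact le_of_mul_le_mul_right (by rwa [← sq]) hpos

end Prox

section Composite

variable {E F : Type*} [NormedAddCommGroup E] [InnerProductSpace ℝ E]
  [NormedAddCommGroup F] [InnerProductSpace ℝ F]

theorem le_add_inner_add_of_lipschitz_gradient [CompleteSpace E] {f : E → ℝ} {gradf : E → E}
    {K : ℝ} (hf : ∀ z, HasGradientAt f (gradf z) z)
    (hLip : ∀ a b, ‖gradf a - gradf b‖ ≤ K * ‖a - b‖) (x y : E) :
    f y ≤ f x + ⟪gradf x, y - x⟫ + K / 2 * ‖y - x‖ ^ 2 := by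
  have hdual : ∀ a b, ‖(InnerProductSpace.toDual ℝ E (gradf a) : E →L[ℝ] ℝ) -
      InnerProductSpace.toDual ℝ E (gradf b)‖ ≤ K * ‖a - b‖ :=
    fun a b => by rw [← map_sub, LinearIsometryEquiv.norm_map]; exact hLip a b
  have := norm_sub_sub_fderiv_le_of_lipschitz (fun z => (hf z).hasFDerivAt) hdual x y
  rw [InnerProductSpace.toDual_apply_apply, Real.norm_eq_abs] at this
  linarith [le_of_abs_le this]

theorem comp_le_comp_add_fderiv_add_of_lipschitz {c : E → F} {J : E → E →L[ℝ] F} {h : F → ℝ}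
    {L_h L_J : ℝ} (hc : ∀ z, HasFDerivAt c (J z) z) (hJLip : ∀ a b, ‖J a - J b‖ ≤ L_J * ‖a - b‖)
    (hhLip : ∀ a b, |h a - h b| ≤ L_h * ‖a - b‖) (hLh : 0 ≤ L_h) (x y : E) :
    h (c y) ≤ h (c x + J x (y - x)) + L_h * L_J / 2 * ‖y - x‖ ^ 2 := by
  have hrem := norm_sub_sub_fderiv_le_of_lipschitz hc hJLip x y
  have hh := le_of_abs_le (hhLip (c y) (c x + J x (y - x)))
  rw [← sub_sub] at hh
  nlinarith [mul_le_mul_of_nonneg_left hrem hLh]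

theorem IsProxPoint.descent [CompleteSpace E] {f : E → ℝ} {gradf : E → E} {c : E → F}
    {J : E → E →L[ℝ] F} {h : F → ℝ} {L_g L_h L_J : ℝ}
    (hf : ∀ z, HasGradientAt f (gradf z) z)
    (hgradLip : ∀ a b, ‖gradf a - gradf b‖ ≤ L_g * ‖a - b‖)
    (hc : ∀ z, HasFDerivAt c (J z) z) (hJLip : ∀ a b, ‖J a - J b‖ ≤ L_J * ‖a - b‖)
    (hconv : ConvexOn ℝ univ h) (hhLip : ∀ a b, |h a - h b| ≤ L_h * ‖a - b‖) (hLh : 0 ≤ L_h)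
    {a g p q : E} {t : ℝ} (ht : 0 < t)
    (hp : IsProxPoint (fun u => h (c a + J a (u - a))) a g t p)
    (hq : IsProxPoint (fun u => h (c a + J a (u - a))) a (gradf a) t q) :
    (t - (L_g + L_h * L_J) * t ^ 2 / 2) * ‖t⁻¹ • (a - p)‖ ^ 2 ≤
      f a + h (c a) - (f p + h (c p)) + t * ⟪g - gradf a, t⁻¹ • (a - q)⟫ +
        t * ‖g - gradf a‖ ^ 2 := by
  have hH : ConvexOn ℝ univ fun u => h (c a + J a (u - a)) :=
    hconv.comp_const_add_sub (c a) (J a : E →ₗ[ℝ] F) a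
  set δ := g - gradf a
  have hmodel : ⟪g, p - a⟫ + h (c a + J a (p - a)) + ‖a - p‖ ^ 2 / t ≤ h (c a) := by
    have := hp.add_sq_norm_sub_div_le hH a
    simp only [sub_self, inner_zero_right, map_zero, add_zero, norm_zero, zero_add] at this
    rw [norm_sub_rev p a, zero_pow two_ne_zero, zero_div, add_zero] at this
    rw [← add_halves (‖a - p‖ ^ 2 / t), div_div, mul_comm t 2]
    linarith
  have hsmooth := le_add_inner_add_of_lipschitz_gradient hf hgradLip a p
  have hcomp := comp_le_comp_add_fderiv_add_of_lipschitz hc hJLip hhLip hLh a p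
  have hnoise : ⟪δ, a - p⟫ ≤ ⟪δ, a - q⟫ + t * ‖δ‖ ^ 2 := by
    have hnonexp : ‖q - p‖ ≤ t * ‖δ‖ := by
      rw [norm_sub_rev g]; exact hq.norm_sub_le hH ht hp
    calc ⟪δ, a - p⟫ = ⟪δ, a - q⟫ + ⟪δ, q - p⟫ := by rw [← inner_add_right, sub_add_sub_cancel]
      _ ≤ ⟪δ, a - q⟫ + ‖δ‖ * (t * ‖δ‖) := by
        gcongr; exact (real_inner_le_norm _ _).trans (by gcongr)
      _ = ⟪δ, a - q⟫ + t * ‖δ‖ ^ 2 := by ring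
  have hsplit : ⟪gradf a, p - a⟫ = ⟪g, p - a⟫ + ⟪δ, a - p⟫ := by
    rw [← neg_sub a p, inner_neg_right, inner_neg_right, inner_sub_left]; ring
  have hlhs : (t - (L_g + L_h * L_J) * t ^ 2 / 2) * ‖t⁻¹ • (a - p)‖ ^ 2 =
      ‖a - p‖ ^ 2 / t - (L_g + L_h * L_J) / 2 * ‖a - p‖ ^ 2 := by
    rw [norm_smul, Real.norm_of_nonneg (inv_nonneg.2 ht.le)]
    field_simp
  rw [norm_sub_rev p a] at hsmooth hcomp
  rw [hlhs, real_inner_smul_right, ← mul_assoc, mul_inv_cancel₀ ht.ne', one_mul]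
  linarith

end Composite

theorem sum_mul_integral_le_integral_of_forall_sum_le {Ω ι : Type*} [MeasurableSpace Ω]
    {μ : Measure Ω} {s : Finset ι} {w : ι → ℝ} {W : ι → Ω → ℝ} {R : Ω → ℝ}
    (hw : ∀ k ∈ s, 0 ≤ w k) (hW : ∀ k ∈ s, ∀ ω, 0 ≤ W k ω) (hR : Integrable R μ)
    (hle : ∀ ω, ∑ k ∈ s, w k * W k ω ≤ R ω) :
    ∑ k ∈ s, w k * ∫ ω, W k ω ∂μ ≤ ∫ ω, R ω ∂μ := by
  classical
  -- the non-integrable `W k` contribute `0` on the left and a nonnegative amount on the right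
  have hS : ∀ k ∈ s.filter (fun k => Integrable (W k) μ), Integrable (fun ω => w k * W k ω) μ :=
    fun k hk => (Finset.mem_filter.1 hk).2.const_mul _
  calc ∑ k ∈ s, w k * ∫ ω, W k ω ∂μ
      = ∑ k ∈ s.filter (fun k => Integrable (W k) μ), w k * ∫ ω, W k ω ∂μ :=
        (Finset.sum_filter_of_ne fun k _ hk =>
          not_not.1 fun hint => hk (by rw [integral_undef hint, mul_zero])).symm
    _ = ∫ ω, ∑ k ∈ s.filter (fun k => Integrable (W k) μ), w k * W k ω ∂μ := by
        rw [integral_finsetSum _ hS]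
        simp only [integral_const_mul]
    _ ≤ ∫ ω, R ω ∂μ := integral_mono (integrable_finsetSum _ hS) hR fun ω =>
        (Finset.sum_le_sum_of_subset_of_nonneg (Finset.filter_subset _ s) fun k hk _ =>
          mul_nonneg (hw k hk) (hW k hk ω)).trans (hle ω)

theorem sum_mul_integral_le_add_sum_of_forall_sum_le {Ω ι κ : Type*} [MeasurableSpace Ω]
    {μ : Measure Ω} [IsProbabilityMeasure μ] {s : Finset ι} {w : ι → ℝ} {W : ι → Ω → ℝ}
    {s' : Finset κ} {B : κ → Ω → ℝ} {β : κ → ℝ} {C : ℝ}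
    (hw : ∀ k ∈ s, 0 ≤ w k) (hW : ∀ k ∈ s, ∀ ω, 0 ≤ W k ω)
    (hB : ∀ k ∈ s', Integrable (B k) μ ∧ ∫ ω, B k ω ∂μ ≤ β k)
    (hle : ∀ ω, ∑ k ∈ s, w k * W k ω ≤ C + ∑ k ∈ s', B k ω) :
    ∑ k ∈ s, w k * ∫ ω, W k ω ∂μ ≤ C + ∑ k ∈ s', β k := by
  have hBint := integrable_finsetSum s' fun k hk => (hB k hk).1
  calc _ ≤ ∫ ω, (C + ∑ k ∈ s', B k ω) ∂μ :=
        sum_mul_integral_le_integral_of_forall_sum_le hw hW ((integrable_const C).add hBint) hle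
    _ = C + ∑ k ∈ s', ∫ ω, B k ω ∂μ := by
        rw [integral_add (integrable_const C) hBint, integral_const,
          integral_finsetSum _ fun k hk => (hB k hk).1, probReal_univ, one_smul]
    _ ≤ C + ∑ k ∈ s', β k := by gcongr with k hk; exact (hB k hk).2

theorem Finset.sum_Icc_le_sub_add_sum {a b V : ℕ → ℝ} {N : ℕ} {low : ℝ} (hN : 1 ≤ N)
    (hstep : ∀ k ∈ Icc 1 N, a k ≤ V k - V (k + 1) + b k) (hlow : low ≤ V (N + 1)) :
    ∑ k ∈ Icc 1 N, a k ≤ V 1 - low + ∑ k ∈ Icc 1 N, b k := by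
  have htel := sum_Icc_sub hN fun k => -V k
  simp only [neg_sub_neg] at htel
  calc ∑ k ∈ Icc 1 N, a k ≤ ∑ k ∈ Icc 1 N, (V k - V (k + 1) + b k) := sum_le_sum hstep
    _ ≤ V 1 - low + ∑ k ∈ Icc 1 N, b k := by rw [sum_add_distrib, htel]; linarith

theorem stmt_0 {n q : ℕ} {Ω : Type*} [MeasureSpace Ω] [IsProbabilityMeasure (ℙ : Measure Ω)]
    (f : EuclideanSpace ℝ (Fin n) → ℝ)
    (gradf : EuclideanSpace ℝ (Fin n) → EuclideanSpace ℝ (Fin n))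
    (c : EuclideanSpace ℝ (Fin n) → EuclideanSpace ℝ (Fin q))
    (J : EuclideanSpace ℝ (Fin n) → EuclideanSpace ℝ (Fin n) →L[ℝ] EuclideanSpace ℝ (Fin q))
    (h : EuclideanSpace ℝ (Fin q) → ℝ)
    (L_g L_h L_J L Φlow σ : ℝ)
    (hLh : 0 < L_h)
    (hL : L = L_g + L_h * L_J)
    (hf : ∀ z, HasGradientAt f (gradf z) z)
    (hgradLip : ∀ a b, ‖gradf a - gradf b‖ ≤ L_g * ‖a - b‖)
    (hc : ∀ z, HasFDerivAt c (J z) z)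
    (hJLip : ∀ a b, ‖J a - J b‖ ≤ L_J * ‖a - b‖)
    (hconv : ConvexOn ℝ Set.univ h)
    (hhLip : ∀ a b, |h a - h b| ≤ L_h * ‖a - b‖)
    (hΦlow : ∀ y, Φlow ≤ f y + h (c y))
    (N : ℕ) (hN : 1 ≤ N)
    (x₁ : EuclideanSpace ℝ (Fin n))
    (x G : ℕ → Ω → EuclideanSpace ℝ (Fin n))
    (γ m : ℕ → ℝ)
    (xplus : EuclideanSpace ℝ (Fin n) → EuclideanSpace ℝ (Fin n) → ℝ →
      EuclideanSpace ℝ (Fin n))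
    -- x⁺(a, g, t) minimizes u ↦ ψ_t(a, g, u) (uniqueness is automatic by strong convexity):
    (hxplus : ∀ (a g : EuclideanSpace ℝ (Fin n)) (t : ℝ), 0 < t → ∀ u,
      ⟪g, xplus a g t - a⟫ + h (c a + J a (xplus a g t - a)) + ‖xplus a g t - a‖ ^ 2 / (2 * t) ≤
        ⟪g, u - a⟫ + h (c a + J a (u - a)) + ‖u - a‖ ^ 2 / (2 * t))
    (hx₁ : ∀ ω, x 1 ω = x₁)
    (hrec : ∀ k ∈ Finset.Icc 1 N, ∀ ω, x (k + 1) ω = xplus (x k ω) (G k ω) (γ k))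
    (hγ : ∀ k ∈ Finset.Icc 1 N, 0 < γ k ∧ γ k ≤ 2 / L)
    -- E[⟨G_k − ∇f(x_k), g̃_k⟩] = 0:
    (hmean : ∀ k ∈ Finset.Icc 1 N,
      Integrable (fun ω => ⟪G k ω - gradf (x k ω),
          (γ k)⁻¹ • (x k ω - xplus (x k ω) (gradf (x k ω)) (γ k))⟫) ℙ ∧
        ∫ ω, ⟪G k ω - gradf (x k ω),
          (γ k)⁻¹ • (x k ω - xplus (x k ω) (gradf (x k ω)) (γ k))⟫ ∂ℙ = 0)
    -- E[‖G_k − ∇f(x_k)‖²] ≤ σ²/m_k: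
    (hvar : ∀ k ∈ Finset.Icc 1 N,
      Integrable (fun ω => ‖G k ω - gradf (x k ω)‖ ^ 2) ℙ ∧
        ∫ ω, ‖G k ω - gradf (x k ω)‖ ^ 2 ∂ℙ ≤ σ ^ 2 / m k) :
    ∑ k ∈ Finset.Icc 1 N, (γ k - L * γ k ^ 2 / 2) *
        ∫ ω, ‖(γ k)⁻¹ • (x k ω - x (k + 1) ω)‖ ^ 2 ∂ℙ ≤
      (f x₁ + h (c x₁)) - Φlow + σ ^ 2 * ∑ k ∈ Finset.Icc 1 N, γ k / m k := by
  set B : ℕ → Ω → ℝ := fun k ω =>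
    γ k * ⟪G k ω - gradf (x k ω), (γ k)⁻¹ • (x k ω - xplus (x k ω) (gradf (x k ω)) (γ k))⟫ +
      γ k * ‖G k ω - gradf (x k ω)‖ ^ 2
  have hweight : ∀ k ∈ Finset.Icc 1 N, 0 ≤ γ k - L * γ k ^ 2 / 2 := by
    intro k hk
    obtain ⟨hγ0, hγ2⟩ := hγ k hk
    rw [le_div_iff₀ ((div_pos_iff_of_pos_left two_pos).1 (hγ0.trans_le hγ2))] at hγ2
    nlinarith
  have hpath : ∀ ω, ∑ k ∈ Finset.Icc 1 N,
      (γ k - L * γ k ^ 2 / 2) * ‖(γ k)⁻¹ • (x k ω - x (k + 1) ω)‖ ^ 2 ≤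
        f x₁ + h (c x₁) - Φlow + ∑ k ∈ Finset.Icc 1 N, B k ω := fun ω => by
    rw [← hx₁ ω]
    refine Finset.sum_Icc_le_sub_add_sum (V := fun k => f (x k ω) + h (c (x k ω))) hN
      (fun k hk => ?_) (hΦlow (x (N + 1) ω))
    have hγ0 := (hγ k hk).1
    rw [hrec k hk ω, hL]
    exact (IsProxPoint.descent hf hgradLip hc hJLip hconv hhLip hLh.le hγ0
      (hxplus _ _ _ hγ0) (hxplus _ _ _ hγ0)).trans_eq (add_assoc _ _ _)
  have hB : ∀ k ∈ Finset.Icc 1 N, Integrable (B k) ℙ ∧ ∫ ω, B k ω ∂ℙ ≤ σ ^ 2 * (γ k / m k) := by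
    intro k hk
    have hinner := (hmean k hk).1.const_mul (γ k)
    have hsq := (hvar k hk).1.const_mul (γ k)
    refine ⟨hinner.add hsq, ?_⟩
    rw [integral_add hinner hsq, integral_const_mul, integral_const_mul, (hmean k hk).2, mul_zero,
      zero_add, mul_div, mul_comm (σ ^ 2), ← mul_div]
    exact mul_le_mul_of_nonneg_left (hvar k hk).2 (hγ k hk).1.le
  rw [Finset.mul_sum]
  exact sum_mul_integral_le_add_sum_of_forall_sum_le hweight (fun _ _ _ => by positivity) hB hpath
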